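/- Let N ≥ 2, let P = {p_1, …, p_{m_0}} ⊂ B_{R_0/2}(0) be a finite set of distinct points with α_j > 0, let R ≥ θ_0 R_0 and let u_R be the unique weak solution of ℳ₀u = Σ_{j=1}^{m_0} α_j δ_{p_j} in B_R(0) with u = 0 on ∂B_R(0) (positive, Lipschitz, classical away from P). Then the maximum of u_R over B_R(0) is attained at one of the points p_j ∈ P, i.e. there exists j with u_R(p_j) = max_{z ∈ B_R(0)} u_R(z). -/

import Mathlib

open MeasureTheory Real Filter Topology Metric
open scoped NNReal

noncomputable section

/-- Euclidean `N`-space `ℝ^N`. -/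
abbrev Euc (N : ℕ) := EuclideanSpace ℝ (Fin N)

/-- Divergence of a vector field on `ℝ^N`. -/
def vdiv {N : ℕ} (V : Euc N → Euc N) (x : Euc N) : ℝ :=
  ∑ i : Fin N,
    (inner ℝ (fderiv ℝ V x (EuclideanSpace.single i (1 : ℝ)))
      (EuclideanSpace.single i (1 : ℝ)) : ℝ)

/-- The Lorentz–Minkowski mean curvature operator `ℳ₀u = -div(∇u/√(1-|∇u|²))`. -/
def MC {N : ℕ} (u : Euc N → ℝ) (x : Euc N) : ℝ :=
  -vdiv (fun y => (Real.sqrt (1 - ‖gradient u y‖ ^ 2))⁻¹ • gradient u y) x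

/-- `|∂B₁(0)|`, the surface area of the unit sphere of `ℝ^N`. -/
def sphArea (N : ℕ) : ℝ := N * (volume (ball (0 : Euc N) 1)).toReal

/-- `c_N = 1/|∂B₁(0)|`. -/
def cN (N : ℕ) : ℝ := (sphArea N)⁻¹

/-- Radial profile of the fundamental light-cone solution, `N ≥ 3`. -/
def Phirad (N : ℕ) (α r : ℝ) : ℝ :=
  cN N * α * ∫ s in Set.Ioi r, (Real.sqrt (s ^ (2 * (N - 1)) + (cN N * α) ^ 2))⁻¹

/-- The fundamental solution `Φ_{N,α}` for `N ≥ 3`. -/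
def Phi (N : ℕ) (α : ℝ) (x : Euc N) : ℝ := Phirad N α ‖x‖

/-- Radial profile of the two-dimensional fundamental solution `Φ_{2,α}`. -/
def Phi2rad (α r : ℝ) : ℝ :=
  -(α / (2 * Real.pi)) *
    (Real.log (r + Real.sqrt ((α / (2 * Real.pi)) ^ 2 + r ^ 2)) - Real.log (α / (2 * Real.pi)))

/-- The two-dimensional fundamental solution `Φ_{2,α}`. -/
def Phi2 (α : ℝ) (x : Euc 2) : ℝ := Phi2rad α ‖x‖

/-- Radial profile of the fundamental solution, any dimension. -/
def PhiradG (N : ℕ) (α r : ℝ) : ℝ := if N = 2 then Phi2rad α r else Phirad N α r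

/-- The weak pairing `∫ ∇u·∇φ/√(1-|∇u|²)`. -/
def pairing {N : ℕ} (u φ : Euc N → ℝ) : ℝ :=
  ∫ x, (inner ℝ (gradient u x) (gradient φ x) : ℝ) / Real.sqrt (1 - ‖gradient u x‖ ^ 2)

/-- The weak pairing `∫_s ∇u·∇φ/√(1-|∇u|²)` on a set `s`. -/
def pairingOn {N : ℕ} (u φ : Euc N → ℝ) (s : Set (Euc N)) : ℝ :=
  ∫ x in s, (inner ℝ (gradient u x) (gradient φ x) : ℝ) / Real.sqrt (1 - ‖gradient u x‖ ^ 2)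

/-- A compactly supported Lipschitz test function. -/
def IsLipTest {N : ℕ} (φ : Euc N → ℝ) : Prop :=
  (∃ K : ℝ≥0, LipschitzWith K φ) ∧ HasCompactSupport φ

/-- `u` is light-cone singular exactly at the points of `P`. -/
def LightConeSingularAt {N : ℕ} (u : Euc N → ℝ) (P : Set (Euc N)) : Prop :=
  (∀ x ∉ P, ‖gradient u x‖ < 1) ∧
    ∀ p ∈ P, Tendsto (fun x => ‖gradient u x‖) (𝓝[≠] p) (𝓝 1)

/-- Weak solution of `ℳ₀u = ∑ αⱼ δ_{pⱼ}` in `𝒟'(ℝ^N)` vanishing at infinity. -/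
def IsWeakSolRN {N m : ℕ} (u : Euc N → ℝ) (p : Fin m → Euc N) (α : Fin m → ℝ) : Prop :=
  (∃ K : ℝ≥0, LipschitzWith K u) ∧
    ContDiffOn ℝ 2 u {x | ∀ j, x ≠ p j} ∧
    LocallyIntegrable (fun x => ‖gradient u x‖ / Real.sqrt (1 - ‖gradient u x‖ ^ 2)) volume ∧
    Tendsto u (cocompact (Euc N)) (𝓝 0) ∧
    ∀ φ : Euc N → ℝ, IsLipTest φ → pairing u φ = ∑ j, α j * φ (p j)

/-- The class `𝕏_∞(ℝ^N)`. -/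
def Xinf {N : ℕ} : Set (Euc N → ℝ) :=
  {v | LipschitzWith 1 v ∧
    Integrable (fun x => 1 - Real.sqrt (1 - ‖gradient v x‖ ^ 2)) volume}

/-- The energy functional `𝒥_N`. -/
def JN {N m : ℕ} (p : Fin m → Euc N) (α : Fin m → ℝ) (w : Euc N → ℝ) : ℝ :=
  (∫ x, (1 - Real.sqrt (1 - ‖gradient w x‖ ^ 2))) - ∑ j, α j * w (p j)

/-- Directional (partial) derivative in the `i`-th coordinate direction. -/
def dirDeriv {N : ℕ} (i : Fin N) (f : Euc N → ℝ) (x : Euc N) : ℝ :=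
  fderiv ℝ f x (EuclideanSpace.single i (1 : ℝ))

/-- The multi-index partial derivative `D^a`. -/
def multiDeriv {N : ℕ} (a : Fin N → ℕ) (f : Euc N → ℝ) : Euc N → ℝ :=
  (List.finRange N).foldr (fun i g => (fun h => dirDeriv i h)^[a i] g) f

/-- `ws` is the symmetric decreasing rearrangement of `w` on the ball `B_R(0)`. -/
def IsSDROn {N : ℕ} (R : ℝ) (w ws : Euc N → ℝ) : Prop :=
  (∀ x y : Euc N, ‖x‖ ≤ ‖y‖ → ws y ≤ ws x) ∧
    ∀ t : ℝ, 0 < t →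
      volume {x : Euc N | x ∈ ball 0 R ∧ t < ws x} = volume {x : Euc N | x ∈ ball 0 R ∧ t < w x}

/-- Classical solution of the Dirichlet problem `ℳ₀u = f` on `B_R(z)`, `u = 0` on `∂B_R(z)`. -/
def IsClassicalDirichletAt {N : ℕ} (u : Euc N → ℝ) (z : Euc N) (R : ℝ) (f : Euc N → ℝ) : Prop :=
  ContinuousOn u (closure (ball z R)) ∧ ContDiffOn ℝ 2 u (ball z R) ∧
    (∀ x ∈ ball z R, ‖gradient u x‖ < 1 ∧ MC u x = f x) ∧
    ∀ x ∈ sphere z R, u x = 0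

/-- Classical solution of `ℳ₀u = f` on `ℝ^N` vanishing at infinity. -/
def IsClassicalEntire {N : ℕ} (u : Euc N → ℝ) (f : Euc N → ℝ) : Prop :=
  ContDiff ℝ 2 u ∧ (∀ x, ‖gradient u x‖ < 1 ∧ MC u x = f x) ∧
    Tendsto u (cocompact (Euc N)) (𝓝 0)

/-- Weak solution of `ℳ₀u = ∑ αⱼ δ_{pⱼ}` on `B_R(z)` with zero boundary data. -/
def IsWeakSolBallAt {N m : ℕ} (u : Euc N → ℝ) (z : Euc N) (R : ℝ)
    (p : Fin m → Euc N) (α : Fin m → ℝ) : Prop :=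
  LipschitzOnWith 1 u (closure (ball z R)) ∧
    (∀ x ∈ sphere z R, u x = 0) ∧
    ContDiffOn ℝ 2 u {x | x ∈ ball z R ∧ ∀ j, x ≠ p j} ∧
    IntegrableOn (fun x => ‖gradient u x‖ / Real.sqrt (1 - ‖gradient u x‖ ^ 2)) (ball z R)
      volume ∧
    ∀ φ : Euc N → ℝ, (∃ K : ℝ≥0, LipschitzWith K φ) → (∀ x ∈ sphere z R, φ x = 0) →
      pairingOn u φ (ball z R) = ∑ j, α j * φ (p j)

/-- The class `𝕏_w(Ω)`. -/
def Xw {N : ℕ} (Ω : Set (Euc N)) (w : Euc N → ℝ) : Set (Euc N → ℝ) :=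
  {v | (∃ K : ℝ≥0, LipschitzOnWith K v (closure Ω)) ∧
    (∀ x ∈ frontier Ω, v x = w x) ∧
    ∀ᵐ x ∂volume.restrict Ω, ‖gradient v x‖ ≤ 1}

/-- The functional `𝓘_{w,H}` (its value does not depend on the boundary datum). -/
def Ifun {N : ℕ} (Ω : Set (Euc N)) (H : Measure (Euc N)) (u : Euc N → ℝ) : ℝ :=
  (∫ x in Ω, Real.sqrt (1 - ‖gradient u x‖ ^ 2)) + ∫ x in Ω, u x ∂H

/-!
Suppose the maximum `M` of `u_R` is not attained on `P`, and pick `0 ≤ c < M` above every value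
`u_R(p_j)`. Testing the equation with `(u_R - c)⁺`, which vanishes at every `p_j`, gives
`∫_{u_R > c} |∇u_R|² / √(1 - |∇u_R|²) = 0`, so `∇u_R = 0` almost everywhere on `{u_R > c}` where
`|∇u_R| < 1`. There `u_R` is `C²`, so this set, on which `∇u_R` then vanishes identically, is open
and closed in `{u_R > c}`; since `∇u_R` vanishes at a maximum point, `u_R` is constant near it.
By connectedness `u_R ≡ M > 0` on the ball, contradicting the boundary condition.
-/

open scoped Gradient

theorem Fintype.exists_le_lt_forall_le_of_forall_lt {ι α : Type*} [Fintype ι] [LinearOrder α]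
    {a : ι → α} {b M : α} (hb : b < M) (ha : ∀ i, a i < M) :
    ∃ c, b ≤ c ∧ c < M ∧ ∀ i, a i ≤ c :=
  ⟨Finset.univ.fold max b a, (Finset.le_fold_max b).2 (Or.inl le_rfl),
    (Finset.fold_max_lt M).2 ⟨hb, fun i _ => ha i⟩,
    fun i => (Finset.le_fold_max (a i)).2 (Or.inr ⟨i, Finset.mem_univ i, le_rfl⟩)⟩

theorem IsPreconnected.eqOn_const_of_eventually_eq {X Y : Type*} [TopologicalSpace X]
    [TopologicalSpace Y] [T1Space Y] {s : Set X} (hs : IsPreconnected s) (hs' : IsOpen s)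
    {f : X → Y} (hf : ContinuousOn f s) {y : Y} {q : X} (hq : q ∈ s) (hfq : f q = y)
    (hloc : ∀ x ∈ s, f x = y → ∀ᶠ z in 𝓝 x, f z = y) : Set.EqOn f (fun _ => y) s := by
  set A := {x | ∀ᶠ z in 𝓝 x, f z = y}
  have hA : IsOpen A := isOpen_setOfPred_eventually_nhds
  have hAf : Set.MapsTo f A {y} := fun x hx => hx.self_of_nhds
  have hsA : s ⊆ A := by
    refine hs.subset_of_closure_inter_subset hA ⟨q, hq, hloc q hq hfq⟩ ?_
    rintro x ⟨hxA, hxs⟩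
    have hfx : f x ∈ closure {y} :=
      (hf.continuousAt (hs'.mem_nhds hxs)).continuousWithinAt.mem_closure hxA hAf
    exact hloc x hxs (by simpa using hfx)
  exact fun x hx => (hsA hx).self_of_nhds

theorem eqOn_zero_connectedComponentIn_of_ae {X F : Type*} [TopologicalSpace X]
    [MeasurableSpace X] [OpensMeasurableSpace X] (μ : Measure X) [μ.IsOpenPosMeasure]
    [NormedAddCommGroup F] {f : X → F} {U : Set X} {r : ℝ} (hr : 0 < r)
    (hU : IsOpen U) (hf : ContinuousOn f U) (hae : ∀ᵐ x ∂μ, x ∈ U → ‖f x‖ < r → f x = 0)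
    {x : X} (hx : x ∈ U) (hfx : f x = 0) : Set.EqOn f 0 (connectedComponentIn U x) := by
  set V := U ∩ f ⁻¹' Metric.ball 0 r
  have hV : IsOpen V := hf.isOpen_inter_preimage hU isOpen_ball
  have hV0 : Set.EqOn f 0 V := by
    refine μ.eqOn_open_of_ae_eq ?_ hV (hf.mono Set.inter_subset_left) continuousOn_const
    filter_upwards [ae_restrict_mem hV.measurableSet, ae_restrict_of_ae hae] with y hyV hy
    exact hy hyV.1 (mem_ball_zero_iff.1 hyV.2)
  have hWV : connectedComponentIn U x ⊆ V := by
    refine isPreconnected_connectedComponentIn.subset_of_closure_inter_subset hV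
      ⟨x, mem_connectedComponentIn hx, hx, by simp [hfx, hr]⟩ ?_
    rintro y ⟨hyV, hyW⟩
    have hyU : y ∈ U := connectedComponentIn_subset U x hyW
    have hfy : f y ∈ closure {(0 : F)} :=
      (hf.continuousAt (hU.mem_nhds hyU)).continuousWithinAt.mem_closure hyV hV0
    rw [closure_singleton, Set.mem_singleton_iff] at hfy
    exact ⟨hyU, by simp [hfy, hr]⟩
  exact hV0.mono hWV

section Gradient

variable {E : Type*} [NormedAddCommGroup E] [InnerProductSpace ℝ E] [CompleteSpace E]

theorem norm_gradient (f : E → ℝ) (x : E) : ‖∇ f x‖ = ‖fderiv ℝ f x‖ :=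
  (InnerProductSpace.toDual ℝ E).symm.norm_map _

theorem gradient_eq_zero_iff {f : E → ℝ} {x : E} : ∇ f x = 0 ↔ fderiv ℝ f x = 0 :=
  (InnerProductSpace.toDual ℝ E).symm.map_eq_zero_iff

theorem measurable_gradient [MeasurableSpace E] [BorelSpace E]
    [SecondCountableTopology E] (f : E → ℝ) : Measurable (∇ f) :=
  (InnerProductSpace.toDual ℝ E).symm.continuous.measurable.comp (measurable_fderiv ℝ f)

theorem ContDiffOn.continuousOn_gradient {f : E → ℝ} {s : Set E} {n : WithTop ℕ∞}
    (hf : ContDiffOn ℝ n f s) (hs : IsOpen s) (hn : 1 ≤ n) : ContinuousOn (∇ f) s :=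
  (InnerProductSpace.toDual ℝ E).symm.continuous.comp_continuousOn
    (hf.continuousOn_fderiv_of_isOpen hs hn)

theorem gradient_max_sub_const_zero {f : E → ℝ} {x : E} (hf : ContinuousAt f x) (c : ℝ) :
    ∇ (fun y => max (f y - c) 0) x = if c < f x then ∇ f x else 0 := by
  split_ifs with hcx
  · have hev : (fun y => max (f y - c) 0) =ᶠ[𝓝 x] fun y => f y - c := by
      filter_upwards [hf.eventually (lt_mem_nhds hcx)] with y hy
      exact max_eq_left (sub_nonneg.2 hy.le)
    rw [hev.gradient_eq]
    simp only [gradient, fderiv_sub_const]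
  · have hmin : IsLocalMin (fun y => max (f y - c) 0) x :=
      Eventually.of_forall fun y => by simp [not_lt.1 hcx]
    exact gradient_eq_zero_iff.2 hmin.fderiv_eq_zero

end Gradient

section WeakSolution

variable {N m : ℕ} {u : Euc N → ℝ} {z : Euc N} {R : ℝ} {p : Fin m → Euc N} {α : Fin m → ℝ}

theorem IsWeakSolBallAt.norm_gradient_le_one (hsol : IsWeakSolBallAt u z R p α) {x : Euc N}
    (hx : x ∈ ball z R) : ‖∇ u x‖ ≤ 1 := by
  rw [norm_gradient]
  exact_mod_cast norm_fderiv_le_of_lipschitzOn ℝ (isOpen_ball.mem_nhds hx)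
    (hsol.1.mono subset_closure)

theorem IsWeakSolBallAt.ae_gradient_eq_zero (hsol : IsWeakSolBallAt u z R p α) (hR : 0 < R)
    (hpB : ∀ j, p j ∈ ball z R) {c : ℝ} (hc : 0 ≤ c) (hpc : ∀ j, u (p j) ≤ c) :
    ∀ᵐ x, x ∈ ball z R → c < u x → ‖∇ u x‖ < 1 → ∇ u x = 0 := by
  set B := ball z R
  have hgrad_le : ∀ x ∈ B, ‖∇ u x‖ ≤ 1 := fun x hx => hsol.norm_gradient_le_one hx
  obtain ⟨hlip, hbd, -, hint, hweak⟩ := hsol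
  have hclB : closure B = closedBall z R := closure_ball z hR.ne'
  obtain ⟨ut, hutlip, hut⟩ := hlip.extend_real
  set φ : Euc N → ℝ := fun x => max (ut x - c) 0
  have hφlip : LipschitzWith 1 φ := by
    simpa using (hutlip.sub (LipschitzWith.const c)).max_const 0
  have hφ_out : ∀ x ∈ closure B, u x ≤ c → φ x = 0 := fun x hx hux => by
    simp [φ, ← hut hx, hux]
  have hgradφ : ∀ x ∈ B, ∇ φ x = if c < u x then ∇ u x else 0 := fun x hx => by
    have hu_ut : u =ᶠ[𝓝 x] ut :=
      eventuallyEq_of_mem (isOpen_ball.mem_nhds hx) fun y hy => hut (subset_closure hy)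
    rw [gradient_max_sub_const_zero hutlip.continuous.continuousAt, hu_ut.gradient_eq,
      hut (subset_closure hx)]
  have hpair : pairingOn u φ B = 0 := by
    rw [hweak φ ⟨1, hφlip⟩ fun x hx =>
      hφ_out x (hclB ▸ sphere_subset_closedBall hx) ((hbd x hx).le.trans hc)]
    exact Finset.sum_eq_zero fun j _ => by rw [hφ_out _ (subset_closure (hpB j)) (hpc j), mul_zero]
  set g : Euc N → ℝ := fun x =>
    inner ℝ (∇ u x) (∇ φ x) / Real.sqrt (1 - ‖∇ u x‖ ^ 2)
  have hg : ∀ x ∈ B, g x = if c < u x then ‖∇ u x‖ ^ 2 / Real.sqrt (1 - ‖∇ u x‖ ^ 2) else 0 :=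
    fun x hx => by
      simp only [g, hgradφ x hx]
      split_ifs <;> simp
  have hg_nonneg : ∀ x ∈ B, 0 ≤ g x := fun x hx => by
    rw [hg x hx]; split_ifs <;> positivity
  have hg_le : ∀ x ∈ B, g x ≤ ‖∇ u x‖ / Real.sqrt (1 - ‖∇ u x‖ ^ 2) := fun x hx => by
    rw [hg x hx]
    split_ifs
    · exact div_le_div_of_nonneg_right
        (pow_le_of_le_one (norm_nonneg _) (hgrad_le x hx) two_ne_zero)
        (Real.sqrt_nonneg _)
    · positivity
  have hg_meas : Measurable g :=
    ((measurable_gradient u).inner (measurable_gradient φ)).div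
      (measurable_const.sub ((measurable_gradient u).norm.pow_const 2)).sqrt
  have hg_int : IntegrableOn g B :=
    hint.mono' hg_meas.aestronglyMeasurable <|
      ae_restrict_of_forall_mem measurableSet_ball fun x hx => by
        rw [Real.norm_of_nonneg (hg_nonneg x hx)]
        exact hg_le x hx
  have hg_zero : ∀ᵐ x, x ∈ B → g x = 0 :=
    (ae_restrict_iff' measurableSet_ball).1 <|
      (integral_eq_zero_iff_of_nonneg_ae
        (ae_restrict_of_forall_mem measurableSet_ball hg_nonneg) hg_int).1 hpair
  filter_upwards [hg_zero] with x hx hxB hcx hlt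
  by_contra hne
  have hsqrt : 0 < Real.sqrt (1 - ‖∇ u x‖ ^ 2) :=
    Real.sqrt_pos.2 (by nlinarith [norm_nonneg (∇ u x)])
  have hpos : 0 < g x := by
    rw [hg x hxB, if_pos hcx]
    exact div_pos (pow_pos (norm_pos_iff.2 hne) 2) hsqrt
  exact hpos.ne' (hx hxB)

theorem IsWeakSolBallAt.eventually_eq_of_isLocalMax (hsol : IsWeakSolBallAt u z R p α)
    (hR : 0 < R) (hpB : ∀ j, p j ∈ ball z R) {c : ℝ} (hc : 0 ≤ c) (hpc : ∀ j, u (p j) ≤ c)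
    {x : Euc N} (hx : x ∈ ball z R) (hcx : c < u x) (hmax : IsLocalMax u x) :
    ∀ᶠ y in 𝓝 x, u y = u x := by
  set U := ball z R ∩ u ⁻¹' Set.Ioi c
  have hU : IsOpen U :=
    (hsol.1.continuousOn.mono subset_closure).isOpen_inter_preimage isOpen_ball isOpen_Ioi
  have hxU : x ∈ U := ⟨hx, hcx⟩
  have hu : ContDiffOn ℝ 2 u U := hsol.2.2.1.mono fun y hy =>
    ⟨hy.1, fun j hj => (hpc j).not_gt (hj ▸ hy.2)⟩
  set W := connectedComponentIn U x
  have hW : IsOpen W := hU.connectedComponentIn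
  have hWU : W ⊆ U := connectedComponentIn_subset U x
  have hae : ∀ᵐ y, y ∈ U → ‖∇ u y‖ < 1 → ∇ u y = 0 := by
    filter_upwards [hsol.ae_gradient_eq_zero hR hpB hc hpc] with y hy hyU using hy hyU.1 hyU.2
  have hW0 : Set.EqOn (∇ u) 0 W :=
    eqOn_zero_connectedComponentIn_of_ae volume one_pos hU (hu.continuousOn_gradient hU one_le_two)
      hae hxU (gradient_eq_zero_iff.2 hmax.fderiv_eq_zero)
  filter_upwards [hW.mem_nhds (mem_connectedComponentIn hxU)] with y hy
  exact hW.is_const_of_fderiv_eq_zero isPreconnected_connectedComponentIn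
    ((hu.differentiableOn two_ne_zero).mono hWU) (fun w hw => gradient_eq_zero_iff.1 (hW0 hw))
    hy (mem_connectedComponentIn hxU)

end WeakSolution

theorem statement17_general (N m0 : ℕ) (hN : 2 ≤ N) (R0 : ℝ) (hR0 : 1 ≤ R0)
    (p : Fin m0 → Euc N) (hpin : ∀ j, ‖p j‖ < R0 / 2)
    (α : Fin m0 → ℝ)
    (R : ℝ) (hR : R0 < R)
    (u : Euc N → ℝ)
    (hsol : IsWeakSolBallAt u 0 R p α)
    (hpos : ∀ x ∈ ball (0 : Euc N) R, 0 < u x) :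
    ∃ j, ∀ z ∈ ball (0 : Euc N) R, u z ≤ u (p j) := by
  by_contra! hcon
  have hR_pos : 0 < R := by linarith
  have hpB : ∀ j, p j ∈ ball 0 R := fun j =>
    mem_ball_zero_iff.2 (by linarith [hpin j, norm_nonneg (p j)])
  have hclB : closure (ball (0 : Euc N) R) = closedBall 0 R := closure_ball 0 hR_pos.ne'
  obtain ⟨q, hq, hq_max⟩ := (isCompact_closedBall (0 : Euc N) R).exists_isMaxOn
    (nonempty_closedBall.2 hR_pos.le) (hclB ▸ hsol.1.continuousOn)
  have hq_max' : ∀ x ∈ ball (0 : Euc N) R, u x ≤ u q := fun x hx => hq_max (ball_subset_closedBall hx)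
  have hM : 0 < u q := (hpos 0 (mem_ball_self hR_pos)).trans_le (hq_max' 0 (mem_ball_self hR_pos))
  have hqB : q ∈ ball (0 : Euc N) R := by
    rcases (mem_closedBall.1 hq).lt_or_eq with hlt | heq
    · exact hlt
    · exact absurd (hsol.2.1 q (mem_sphere.2 heq)) hM.ne'
  obtain ⟨c, hc, hcM, hpc⟩ := Fintype.exists_le_lt_forall_le_of_forall_lt hM fun j =>
    (hcon j).elim fun x hx => hx.2.trans_le (hq_max' x hx.1)
  have hconst : Set.EqOn u (fun _ => u q) (ball 0 R) := by
    refine (convex_ball (0 : Euc N) R).isPreconnected.eqOn_const_of_eventually_eq isOpen_ball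
      (hsol.1.continuousOn.mono subset_closure) hqB rfl fun x hx hux => ?_
    have hmax : IsMaxOn u (ball 0 R) x := fun y hy => hux ▸ hq_max' y hy
    simpa only [hux] using hsol.eventually_eq_of_isLocalMax hR_pos hpB hc hpc hx (hux ▸ hcM)
      (hmax.isLocalMax (isOpen_ball.mem_nhds hx))
  obtain ⟨w, hw⟩ : (sphere (0 : Euc N) R).Nonempty :=
    ⟨EuclideanSpace.single ⟨0, by omega⟩ R, by simp [abs_of_pos hR_pos]⟩
  have hconst' := hconst.of_subset_closure hsol.1.continuousOn continuousOn_const subset_closure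
    subset_rfl (hclB ▸ sphere_subset_closedBall hw)
  exact hM.ne ((hsol.2.1 w hw).symm.trans hconst')

/-- Proposition 3.5: the maximum of the solution with Dirac masses on a
ball is attained at one of the singular points. -/
theorem statement17 (N m0 : ℕ) (hN : 2 ≤ N) (R0 : ℝ) (hR0 : 1 ≤ R0)
    (p : Fin m0 → Euc N) (hp : Function.Injective p) (hpin : ∀ j, ‖p j‖ < R0 / 2)
    (α : Fin m0 → ℝ) (hα : ∀ j, 0 < α j)
    (R : ℝ) (hR : R0 < R)
    (u : Euc N → ℝ)
    (hsol : IsWeakSolBallAt u 0 R p α)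
    (hclassical : ∀ x ∈ ball (0 : Euc N) R, (∀ j, x ≠ p j) → MC u x = 0)
    (hpos : ∀ x ∈ ball (0 : Euc N) R, 0 < u x) :
    ∃ j, ∀ z ∈ ball (0 : Euc N) R, u z ≤ u (p j) :=
  statement17_general N m0 hN R0 hR0 p hpin α R hR u hsol hpos
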